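/- arXiv:1812.06291 — 8 statements merged into one kernel-verified Lean document; each statement's English description precedes it below -/
import Mathlib

section
/- Let Ĝ be a finite simple graph on nonempty vertex set V̂ with vertex weights w : V̂ → ℕ⁺ and guard-band size GB ∈ ℕ. Then the optimal MUFI satisfies |opt(Ĝ)| ≤ (χ(Ĝ) − 1)·GB + Σ_{i=1}^{χ(Ĝ)} ŵ_{I(i)}, where χ(Ĝ) is the chromatic number of Ĝ and ŵ_{I(1)} ≥ ŵ_{I(2)} ≥ … are the vertex weights listed in nonincreasing order (so the sum is over the χ(Ĝ) largest vertex weights). -/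
/-- A proper spectrum assignment: each vertex `v` receives the interval of `w v`
consecutive positive integers starting at `b v`, and for every edge the two intervals
are at distance at least `GB`. -/
def IsProperAssign {V : Type*} (G : SimpleGraph V) (w : V → ℕ) (GB : ℕ) (b : V → ℕ) : Prop :=
  (∀ v, 1 ≤ b v) ∧
  ∀ u v : V, G.Adj u v →
    ∀ s ∈ Finset.Icc (b u) (b u + w u - 1), ∀ t ∈ Finset.Icc (b v) (b v + w v - 1),
      (GB : ℤ) ≤ |(s : ℤ) - (t : ℤ)| - 1

/-- The maximum used frequency-slot index of an assignment. -/
def MUFI {V : Type*} [Fintype V] (w b : V → ℕ) : ℕ :=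
  Finset.univ.sup fun v => b v + w v - 1

/-- The optimal MUFI: the minimum MUFI over all proper spectrum assignments. -/
noncomputable def optMUFI {V : Type*} [Fintype V] (G : SimpleGraph V) (w : V → ℕ)
    (GB : ℕ) : ℕ :=
  sInf {m : ℕ | ∃ b : V → ℕ, IsProperAssign G w GB b ∧ MUFI w b = m}

/-!
Colour `Ĝ` with `χ` colours and give colour class `j` a block of `M j` consecutive slots, where
`M j` is the largest weight in that class, leaving `GB` free slots between consecutive blocks.
Vertices of different colours then get intervals at least `GB` apart, and the last used slot is
at most `(χ - 1) * GB + ∑ j, M j`. Each nonzero `M j` is the weight of a vertex of colour `j`,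
so the `M j` are weights of at most `χ` distinct vertices and their sum is at most the sum of
the `χ` largest weights.
-/

open Finset

section SortedSums

variable {α : Type*} [AddCommMonoid α] [LinearOrder α] [IsOrderedAddMonoid α]
  [CanonicallyOrderedAdd α]

namespace List

theorem sum_take_succ_le_add_sum_take {l : List α} {a : α} (ha : ∀ x ∈ l, x ≤ a) (m : ℕ) :
    (l.take (m + 1)).sum ≤ a + (l.take m).sum := by
  by_cases hm : m < l.length
  · rw [sum_take_succ l m hm, add_comm]
    exact add_le_add_left (ha _ (getElem_mem hm)) _
  · rw [take_of_length_le (by omega), take_of_length_le (by omega)]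
    exact le_add_self

end List

namespace Multiset

theorem sum_le_sum_take_of_pairwise_ge {l : List α} (hl : l.Pairwise (· ≥ ·))
    {t : Multiset α} (ht : t ≤ l) {k : ℕ} (hk : card t ≤ k) :
    t.sum ≤ (l.take k).sum := by
  classical
  induction l generalizing t k with
  | nil => simp [le_zero.mp ht]
  | cons a l ih =>
    obtain ⟨ha, hl⟩ := List.pairwise_cons.mp hl
    rw [← cons_coe] at ht
    cases k with
    | zero => simp [card_eq_zero.mp (Nat.le_zero.mp hk)]
    | succ m =>
      rw [List.take_succ_cons, List.sum_cons]
      by_cases hat : a ∈ t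
      · have hrest : t.erase a ≤ l := by
          simpa using erase_le_erase a ht
        have hcard : card (t.erase a) ≤ m := by
          rw [card_erase_of_mem hat, Nat.pred_eq_sub_one]; omega
        rw [← cons_erase hat, Multiset.sum_cons]
        exact add_le_add_right (ih hl hrest hcard) a
      · calc t.sum ≤ (l.take (m + 1)).sum := ih hl ((le_cons_of_notMem hat).mp ht) hk
          _ ≤ a + (l.take m).sum := l.sum_take_succ_le_add_sum_take ha m

theorem sum_le_sum_take_sort {s t : Multiset α} (hts : t ≤ s) {k : ℕ} (hk : card t ≤ k) :
    t.sum ≤ ((s.sort (· ≥ ·)).take k).sum :=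
  sum_le_sum_take_of_pairwise_ge (pairwise_sort s _) (by rwa [sort_eq]) hk

end Multiset

end SortedSums

section SpectrumAssignment

variable {V : Type*}

theorem le_abs_sub_sub_one_of_add_le {bu wu bv wv GB : ℕ} (hbu : 1 ≤ bu)
    (h : bu + wu + GB ≤ bv) :
    ∀ s ∈ Icc bu (bu + wu - 1), ∀ t ∈ Icc bv (bv + wv - 1),
      (GB : ℤ) ≤ |(s : ℤ) - (t : ℤ)| - 1 := by
  intro s hs t ht
  rw [mem_Icc] at hs ht
  rw [abs_sub_comm, abs_of_nonneg (by omega)]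
  omega

def blockStart (M : ℕ → ℕ) (GB j : ℕ) : ℕ :=
  1 + ∑ i ∈ range j, (M i + GB)

theorem blockStart_add_le {M : ℕ → ℕ} {GB i j : ℕ} (hij : i < j) :
    blockStart M GB i + M i + GB ≤ blockStart M GB j := by
  have := sum_le_sum_of_subset (f := fun i => M i + GB) (range_subset_range.mpr hij)
  rw [sum_range_succ] at this
  unfold blockStart
  omega

theorem blockStart_add_sub_one_le (M : ℕ → ℕ) (GB : ℕ) {j k : ℕ} (hjk : j < k) :
    blockStart M GB j + M j - 1 ≤ (k - 1) * GB + ∑ i ∈ range k, M i := by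
  have hsum := sum_le_sum_of_subset (f := M) (range_subset_range.mpr hjk)
  have hGB : j * GB ≤ (k - 1) * GB := Nat.mul_le_mul_right GB (by omega)
  rw [sum_range_succ] at hsum
  unfold blockStart
  rw [sum_add_distrib, sum_const, card_range, smul_eq_mul]
  omega

theorem isProperAssign_blockStart (G : SimpleGraph V) (w : V → ℕ) (GB : ℕ) {f : V → ℕ}
    (hf : ∀ u v, G.Adj u v → f u ≠ f v) {M : ℕ → ℕ} (hM : ∀ v, w v ≤ M (f v)) :
    IsProperAssign G w GB fun v => blockStart M GB (f v) := by
  have hpos : ∀ j, 1 ≤ blockStart M GB j := fun j => Nat.le_add_right 1 _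
  have hsep : ∀ u v, f u < f v →
      blockStart M GB (f u) + w u + GB ≤ blockStart M GB (f v) := fun u v huv =>
    le_trans (by have := hM u; omega) (blockStart_add_le huv)
  refine ⟨fun v => hpos _, fun u v huv s hs t ht => ?_⟩
  rcases (hf u v huv).lt_or_gt with h | h
  · exact le_abs_sub_sub_one_of_add_le (hpos _) (hsep u v h) s hs t ht
  · rw [abs_sub_comm]
    exact le_abs_sub_sub_one_of_add_le (hpos _) (hsep v u h) t ht s hs

variable [Fintype V]

theorem MUFI_blockStart_le (w : V → ℕ) (GB : ℕ) {f : V → ℕ} {k : ℕ}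
    (hf : ∀ v, f v < k) {M : ℕ → ℕ} (hM : ∀ v, w v ≤ M (f v)) :
    MUFI w (fun v => blockStart M GB (f v)) ≤ (k - 1) * GB + ∑ i ∈ range k, M i :=
  Finset.sup_le fun v _ => (Nat.sub_le_sub_right (Nat.add_le_add_left (hM v) _) 1).trans
    (blockStart_add_sub_one_le M GB (hf v))

variable {ι : Type*} [DecidableEq ι]

/-- `0` on an empty fibre. -/
def fiberMax (f : V → ι) (w : V → ℕ) (j : ι) : ℕ :=
  ({v | f v = j} : Finset V).sup w

theorem le_fiberMax (f : V → ι) (w : V → ℕ) (v : V) : w v ≤ fiberMax f w (f v) :=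
  le_sup (by simp)

theorem exists_fiberMax_eq {f : V → ι} {w : V → ℕ} {j : ι} (h : fiberMax f w j ≠ 0) :
    ∃ v, f v = j ∧ fiberMax f w j = w v := by
  have hne : ({v | f v = j} : Finset V).Nonempty :=
    nonempty_of_ne_empty fun he => h (by rw [fiberMax, he, sup_empty]; rfl)
  obtain ⟨v, hv, hsup⟩ := exists_mem_eq_sup _ hne w
  exact ⟨v, (mem_filter.mp hv).2, hsup⟩

theorem exists_sum_fiberMax_le (f : V → ι) (w : V → ℕ) (J : Finset ι) :
    ∃ R : Finset V, #R ≤ #J ∧ ∑ j ∈ J, fiberMax f w j ≤ ∑ v ∈ R, w v := by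
  classical
  set J' := J.filter fun j => fiberMax f w j ≠ 0
  choose rep hrep_fiber hrep_eq using fun j (hj : j ∈ J') =>
    exists_fiberMax_eq (mem_filter.mp hj).2
  have hinj : Set.InjOn (fun j : J' => rep j.1 j.2) ↑J'.attach := fun i _ j _ hij =>
    Subtype.ext ((hrep_fiber i.1 i.2).symm.trans ((congrArg f hij).trans (hrep_fiber j.1 j.2)))
  refine ⟨J'.attach.image fun j => rep j.1 j.2, card_image_le.trans ?_, ?_⟩
  · rw [card_attach]
    exact card_filter_le _ _
  · rw [sum_image hinj, ← sum_filter_ne_zero, ← sum_attach]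
    exact (sum_congr rfl fun j _ => hrep_eq j.1 j.2).le

theorem optMUFI_le_of_colorable {G : SimpleGraph V} (w : V → ℕ) (GB : ℕ) {k : ℕ}
    (hG : G.Colorable k) :
    optMUFI G w GB ≤ (k - 1) * GB +
      ((Multiset.sort (Finset.univ.val.map w) (· ≥ ·)).take k).sum := by
  classical
  obtain ⟨C⟩ := hG
  let f : V → ℕ := fun v => C v
  have hf : ∀ u v, G.Adj u v → f u ≠ f v := fun _ _ h => Fin.val_injective.ne (C.valid h)
  obtain ⟨R, hRk, hsumR⟩ := exists_sum_fiberMax_le f w (range k)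
  have hR : R.val.map w ≤ univ.val.map w :=
    Multiset.map_le_map (val_le_iff.mpr (subset_univ R))
  calc optMUFI G w GB ≤ MUFI w fun v => blockStart (fiberMax f w) GB (f v) :=
        Nat.sInf_le ⟨_, isProperAssign_blockStart G w GB hf (le_fiberMax f w), rfl⟩
    _ ≤ (k - 1) * GB + ∑ j ∈ range k, fiberMax f w j :=
        MUFI_blockStart_le w GB (fun v => (C v).isLt) (le_fiberMax f w)
    _ ≤ (k - 1) * GB + ∑ v ∈ R, w v := Nat.add_le_add_left hsumR _
    _ ≤ _ := Nat.add_le_add_left (Multiset.sum_le_sum_take_sort hR (by simpa using hRk)) _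

end SpectrumAssignment

theorem optMUFI_le_chromatic_upper_general {V : Type*} [Fintype V]
    (G : SimpleGraph V) (w : V → ℕ) (GB : ℕ)
    (χ : ℕ) (hχ : G.chromaticNumber = (χ : ℕ∞)) :
    optMUFI G w GB ≤ (χ - 1) * GB +
      ((Multiset.sort (Finset.univ.val.map w) (· ≥ ·)).take χ).sum :=
  optMUFI_le_of_colorable w GB (SimpleGraph.chromaticNumber_le_iff_colorable.mp hχ.le)

/-- The optimal MUFI is at most `(χ(Ĝ) - 1)·GB` plus the sum of the `χ(Ĝ)` largest
vertex weights. -/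
theorem optMUFI_le_chromatic_upper {V : Type*} [Fintype V] [Nonempty V]
    (G : SimpleGraph V) (w : V → ℕ) (hw : ∀ v, 1 ≤ w v) (GB : ℕ)
    (χ : ℕ) (hχ : G.chromaticNumber = (χ : ℕ∞)) :
    optMUFI G w GB ≤ (χ - 1) * GB +
      ((Multiset.sort (Finset.univ.val.map w) (· ≥ ·)).take χ).sum :=
  optMUFI_le_chromatic_upper_general G w GB χ hχ
end

section
/- Let Ĝ be a finite simple graph on nonempty vertex set V̂ with vertex weights w : V̂ → ℕ⁺ and guard-band size GB ∈ ℕ. Then the optimal MUFI satisfies |opt(Ĝ)| ≥ (χ(Ĝ) − 1)·GB + Σ_{i=1}^{χ(Ĝ)} ŵ_{D(i)}, where χ(Ĝ) is the chromatic number of Ĝ and ŵ_{D(1)} ≤ ŵ_{D(2)} ≤ … are the vertex weights listed in nondecreasing order (so the sum is over the χ(Ĝ) smallest vertex weights). -/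
theorem List.Sublist.sum_take_length_le {α : Type*} [AddCommMonoid α] [PartialOrder α]
    [IsOrderedAddMonoid α] {l' l : List α} (h : List.Sublist l' l) (hl : l.Pairwise (· ≤ ·)) :
    (l.take l'.length).sum ≤ l'.sum := by
  induction h with
  | slnil => simp
  | @cons l₁ l₂ a h ih =>
    cases hlen : l₁.length with
    | zero => simp [List.length_eq_zero_iff.mp hlen]
    | succ m =>
      have hm : m < l₂.length := by have := h.length_le; omega
      have ha : a ≤ l₂[m] := List.rel_of_pairwise_cons hl (List.getElem_mem hm)
      calc ((a :: l₂).take (m + 1)).sum = a + (l₂.take m).sum := by simp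
        _ ≤ l₂[m] + (l₂.take m).sum := by gcongr
        _ = (l₂.take (m + 1)).sum := by rw [List.sum_take_succ _ _ hm, add_comm]
        _ ≤ l₁.sum := hlen ▸ ih hl.of_cons
  | cons_cons a h ih =>
    simpa using add_le_add_right (ih hl.of_cons) a

theorem Multiset.sum_take_card_sort_le_of_le {α : Type*} [AddCommMonoid α] [LinearOrder α]
    [IsOrderedAddMonoid α] {s t : Multiset α} (h : t ≤ s) :
    ((s.sort (· ≤ ·)).take (card t)).sum ≤ t.sum := by
  have hsub : List.Sublist (t.sort (· ≤ ·)) (s.sort (· ≤ ·)) :=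
    List.sublist_of_subperm_of_pairwise (by rwa [← Multiset.coe_le, sort_eq, sort_eq])
      (pairwise_sort _ _) (pairwise_sort _ _)
  simpa [← sum_coe (t.sort _)] using hsub.sum_take_length_le (pairwise_sort _ _)

theorem Nat.Icc_separated_iff {a m c n g : ℕ} (hm : 1 ≤ m) (hn : 1 ≤ n) :
    (∀ s ∈ Finset.Icc a (a + m - 1), ∀ t ∈ Finset.Icc c (c + n - 1),
      (g : ℤ) ≤ |(s : ℤ) - (t : ℤ)| - 1) ↔ a + m + g ≤ c ∨ c + n + g ≤ a := by
  simp only [Finset.mem_Icc, le_sub_iff_add_le, le_abs']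
  constructor
  · intro h
    rcases le_total a c with hac | hca
    · have := h (min (a + m - 1) c) (by omega) c (by omega)
      omega
    · have := h a (by omega) (min (c + n - 1) a) (by omega)
      omega
  · intro hsep s hs t ht
    omega

section ChainHeight

variable {V : Type*} [Fintype V] {r : V → V → Prop}

variable (r) in
/-- `chainHeight r v + 1` is the size of a longest `r`-chain with top element `v`. -/
noncomputable def chainHeight (v : V) : ℕ :=
  sSup {n | ∃ C : Finset V, IsChain r (C : Set V) ∧ (∀ x ∈ C, r x v) ∧ C.card = n}

theorem bddAbove_chainHeight_set (v : V) :
    BddAbove {n | ∃ C : Finset V, IsChain r (C : Set V) ∧ (∀ x ∈ C, r x v) ∧ C.card = n} :=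
  ⟨Fintype.card V, by rintro _ ⟨C, -, -, rfl⟩; exact C.card_le_univ⟩

theorem card_le_chainHeight {C : Finset V} {v : V} (hC : IsChain r (C : Set V))
    (hCv : ∀ x ∈ C, r x v) : C.card ≤ chainHeight r v :=
  le_csSup (bddAbove_chainHeight_set v) ⟨C, hC, hCv, rfl⟩

theorem exists_isChain_card_eq_chainHeight (v : V) :
    ∃ C : Finset V, IsChain r (C : Set V) ∧ (∀ x ∈ C, r x v) ∧ C.card = chainHeight r v :=
  Nat.sSup_mem ⟨0, by exact ⟨∅, by simp [IsChain]⟩⟩ (bddAbove_chainHeight_set v)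

variable [IsStrictOrder V r]

theorem exists_isChain_card_eq_chainHeight_add_one (v : V) :
    ∃ C : Finset V, IsChain r (C : Set V) ∧ (∀ x ∈ C, x = v ∨ r x v) ∧
      C.card = chainHeight r v + 1 := by
  classical
  obtain ⟨C, hC, hCv, hcard⟩ := exists_isChain_card_eq_chainHeight (r := r) v
  have hv : v ∉ C := fun hv => irrefl v (hCv v hv)
  refine ⟨insert v C, ?_, ?_, by rw [Finset.card_insert_of_notMem hv, hcard]⟩
  · rw [Finset.coe_insert]
    exact hC.insert fun x hx _ => Or.inr (hCv x hx)
  · simpa using fun x hx => Or.inr (hCv x hx)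

theorem chainHeight_lt_chainHeight {u v : V} (huv : r u v) :
    chainHeight r u < chainHeight r v := by
  obtain ⟨C, hC, hCu, hcard⟩ := exists_isChain_card_eq_chainHeight_add_one (r := r) u
  have hCv : ∀ x ∈ C, r x v := fun x hx =>
    (hCu x hx).elim (fun hxu => hxu ▸ huv) fun hxu => _root_.trans hxu huv
  have := card_le_chainHeight hC hCv
  omega

theorem SimpleGraph.colorable_of_forall_isChain_card_le (G : SimpleGraph V)
    (hG : ∀ u v, G.Adj u v → r u v ∨ r v u) {n : ℕ}
    (hn : ∀ C : Finset V, IsChain r (C : Set V) → C.card ≤ n) : G.Colorable n := by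
  refine (G.colorable_iff_exists_bdd_nat_coloring n).mpr
    ⟨SimpleGraph.Coloring.mk (chainHeight r) fun {u v} huv => ?_, fun v => ?_⟩
  · rcases hG u v huv with h | h
    · exact (chainHeight_lt_chainHeight h).ne
    · exact (chainHeight_lt_chainHeight h).ne'
  · obtain ⟨C, hC, -, hcard⟩ := exists_isChain_card_eq_chainHeight_add_one (r := r) v
    have := hn C hC
    change chainHeight r v < n
    omega

theorem SimpleGraph.exists_isChain_chromaticNumber_le (G : SimpleGraph V)
    (hG : ∀ u v, G.Adj u v → r u v ∨ r v u) :
    ∃ C : Finset V, IsChain r (C : Set V) ∧ G.chromaticNumber ≤ C.card := by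
  classical
  obtain ⟨C, hC, hmax⟩ :=
    (Finset.univ.filter fun C : Finset V => IsChain r (C : Set V)).exists_max_image
      Finset.card ⟨∅, Finset.mem_filter.mpr ⟨Finset.mem_univ _, by simp [IsChain]⟩⟩
  have hmax' : ∀ D : Finset V, IsChain r (D : Set V) → D.card ≤ C.card := fun D hD =>
    hmax D (Finset.mem_filter.mpr ⟨Finset.mem_univ _, hD⟩)
  exact ⟨C, (Finset.mem_filter.mp hC).2,
    (G.colorable_of_forall_isChain_card_le hG hmax').chromaticNumber_le⟩

end ChainHeight

section IntervalPrecedes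

variable {V : Type*} {w b : V → ℕ} {GB : ℕ}

variable (w b GB) in
/-- At least `GB` free slots separate the last slot of `u` from the first slot of `v`. -/
def IntervalPrecedes (u v : V) : Prop :=
  b u + w u + GB ≤ b v

theorem isStrictOrder_intervalPrecedes (hw : ∀ v, 1 ≤ w v) :
    IsStrictOrder V (IntervalPrecedes w b GB) where
  irrefl v h := by have := hw v; unfold IntervalPrecedes at h; omega
  trans u v x huv hvx := by unfold IntervalPrecedes at *; omega

theorem isProperAssign_iff (G : SimpleGraph V) (hw : ∀ v, 1 ≤ w v) :
    IsProperAssign G w GB b ↔ (∀ v, 1 ≤ b v) ∧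
      ∀ u v, G.Adj u v → IntervalPrecedes w b GB u v ∨ IntervalPrecedes w b GB v u := by
  simp only [IsProperAssign, IntervalPrecedes, Nat.Icc_separated_iff (hw _) (hw _)]

theorem exists_isProperAssign [Fintype V] (G : SimpleGraph V) (hw : ∀ v, 1 ≤ w v) :
    ∃ b, IsProperAssign G w GB b := by
  set K := Finset.univ.sup w + GB with hK
  let e := Fintype.equivFin V
  have hspread : ∀ u v, e u < e v → IntervalPrecedes w (fun v => 1 + e v * K) GB u v := by
    intro u v huv
    have hwu : w u ≤ Finset.univ.sup w := Finset.le_sup (Finset.mem_univ u)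
    have : e u * K + K ≤ e v * K := by simpa [add_mul] using Nat.mul_le_mul_right K huv
    simp only [IntervalPrecedes]
    omega
  refine ⟨fun v => 1 + e v * K,
    (isProperAssign_iff G hw).mpr ⟨fun v => by omega, fun u v huv => ?_⟩⟩
  rcases lt_or_gt_of_ne (e.injective.ne huv.ne) with h | h
  · exact Or.inl (hspread u v h)
  · exact Or.inr (hspread v u h)

theorem IsChain.card_sub_one_mul_add_sum_le_sup (hw : ∀ v, 1 ≤ w v) (hb : ∀ v, 1 ≤ b v)
    {C : Finset V} (hC : IsChain (IntervalPrecedes w b GB) (C : Set V)) :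
    (C.card - 1) * GB + ∑ v ∈ C, w v ≤ C.sup fun v => b v + w v - 1 := by
  classical
  induction C using Finset.induction_on_max_value b with
  | empty => simp
  | insert a s ha hmax ih =>
    have hlast : b a + w a - 1 ≤ (insert a s).sup fun v => b v + w v - 1 :=
      Finset.le_sup (f := fun v => b v + w v - 1) (Finset.mem_insert_self a s)
    rw [Finset.sum_insert ha, Finset.card_insert_of_notMem ha, Nat.add_sub_cancel]
    rcases s.eq_empty_or_nonempty with rfl | hs
    · have := hb a
      simp only [Finset.sum_empty, Finset.card_empty] at hlast ⊢
      omega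
    obtain ⟨x, hx, hsup⟩ := s.exists_mem_eq_sup hs fun v => b v + w v - 1
    have hxa : b x + w x + GB ≤ b a := by
      refine (hC (by simp [hx]) (by simp) (ne_of_mem_of_not_mem hx ha)).resolve_right fun hax => ?_
      have := hw a
      have := hmax x hx
      unfold IntervalPrecedes at hax
      omega
    have hs_ih : (s.card - 1) * GB + ∑ v ∈ s, w v ≤ b x + w x - 1 :=
      hsup ▸ ih (hC.mono (by simp))
    have hcard : (s.card - 1) * GB + GB = s.card * GB := by
      rw [← Nat.succ_mul, Nat.succ_eq_add_one, Nat.sub_add_cancel hs.card_pos]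
    have := hb x
    omega

end IntervalPrecedes

theorem chromatic_lower_le_optMUFI_general {V : Type*} [Fintype V]
    (G : SimpleGraph V) (w : V → ℕ) (hw : ∀ v, 1 ≤ w v) (GB : ℕ)
    (χ : ℕ) (hχ : G.chromaticNumber = (χ : ℕ∞)) :
    (χ - 1) * GB + ((Multiset.sort (Finset.univ.val.map w) (· ≤ ·)).take χ).sum ≤
      optMUFI G w GB := by
  set L := Multiset.sort (Finset.univ.val.map w) (· ≤ ·)
  obtain ⟨b₀, hb₀⟩ := exists_isProperAssign G hw (GB := GB)
  refine le_csInf ⟨_, b₀, hb₀, rfl⟩ ?_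
  rintro _ ⟨b, hb, rfl⟩
  have := isStrictOrder_intervalPrecedes (b := b) (GB := GB) hw
  obtain ⟨C, hC, hχC⟩ := G.exists_isChain_chromaticNumber_le ((isProperAssign_iff G hw).mp hb).2
  replace hχC : χ ≤ C.card := by exact_mod_cast hχ ▸ hχC
  have hsmallest : (L.take C.card).sum ≤ ∑ v ∈ C, w v := by
    simpa using Multiset.sum_take_card_sort_le_of_le
      (Multiset.map_le_map (f := w) (Finset.val_le_iff.mpr C.subset_univ))
  calc (χ - 1) * GB + (L.take χ).sum
      ≤ (C.card - 1) * GB + (L.take C.card).sum := by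
        gcongr
        exact List.monotone_sum_take _ hχC
    _ ≤ (C.card - 1) * GB + ∑ v ∈ C, w v := by gcongr
    _ ≤ C.sup fun v => b v + w v - 1 := hC.card_sub_one_mul_add_sum_le_sup hw hb.1
    _ ≤ MUFI w b := Finset.sup_mono C.subset_univ

/-- The optimal MUFI is at least `(χ(Ĝ) - 1)·GB` plus the sum of the `χ(Ĝ)` smallest
vertex weights. -/
theorem chromatic_lower_le_optMUFI {V : Type*} [Fintype V] [Nonempty V]
    (G : SimpleGraph V) (w : V → ℕ) (hw : ∀ v, 1 ≤ w v) (GB : ℕ)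
    (χ : ℕ) (hχ : G.chromaticNumber = (χ : ℕ∞)) :
    (χ - 1) * GB + ((Multiset.sort (Finset.univ.val.map w) (· ≤ ·)).take χ).sum ≤
      optMUFI G w GB :=
  chromatic_lower_le_optMUFI_general G w hw GB χ hχ
end

section
/- Let Ĝ be a finite simple graph on nonempty vertex set V̂ with vertex weights w : V̂ → ℕ⁺ satisfying α ≤ w(v) ≤ β for all v, where α, β ∈ ℕ⁺, and let GB ∈ ℕ be the guard-band size. Then (χ(Ĝ) − 1)·GB + χ(Ĝ)·α ≤ |opt(Ĝ)| ≤ (χ(Ĝ) − 1)·GB + χ(Ĝ)·β. -/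
/-- If all vertex weights lie in `[α, β]`, then
`(χ-1)·GB + χ·α ≤ |opt(Ĝ)| ≤ (χ-1)·GB + χ·β`. -/
theorem optMUFI_bounds_of_weight_bounds {V : Type*} [Fintype V] [Nonempty V]
    (G : SimpleGraph V) (w : V → ℕ) (GB : ℕ) (α β : ℕ)
    (hα : 1 ≤ α) (hβ : 1 ≤ β) (hwα : ∀ v, α ≤ w v) (hwβ : ∀ v, w v ≤ β)
    (χ : ℕ) (hχ : G.chromaticNumber = (χ : ℕ∞)) :
    (χ - 1) * GB + χ * α ≤ optMUFI G w GB ∧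
      optMUFI G w GB ≤ (χ - 1) * GB + χ * β := by
  classical
  have hw1 : ∀ v, 1 ≤ w v := fun v => hα.trans (hwα v)
  have hcol : G.Colorable χ := by
    have := G.colorable_chromaticNumber_of_fintype
    rwa [hχ, ENat.toNat_coe] at this
  have hχ1 : 1 ≤ χ := by
    have h0 : (0 : ℕ∞) < G.chromaticNumber :=
      G.chromaticNumber_pos G.colorable_of_fintype
    rw [hχ] at h0
    exact_mod_cast h0
  obtain ⟨k, rfl⟩ : ∃ k, χ = k + 1 := ⟨χ - 1, by omega⟩
  simp only [Nat.add_sub_cancel]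
  obtain ⟨C⟩ := hcol
  set b0 : V → ℕ := fun v => 1 + (C v : ℕ) * (β + GB) with hb0
  -- the key one-sided separation estimate for the explicit assignment
  have key : ∀ u v : V, (C u : ℕ) < (C v : ℕ) →
      ∀ s ∈ Finset.Icc (b0 u) (b0 u + w u - 1), ∀ t ∈ Finset.Icc (b0 v) (b0 v + w v - 1),
        (GB : ℤ) ≤ (t : ℤ) - (s : ℤ) - 1 := by
    intro u v hlt s hs t ht
    simp only [Finset.mem_Icc] at hs ht
    have hs2 : s ≤ (C u : ℕ) * (β + GB) + w u := by
      have := hs.2; simp only [hb0] at this; omega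
    have hsw : s ≤ (C u : ℕ) * (β + GB) + β := hs2.trans (by have := hwβ u; omega)
    have ht1 : 1 + (C v : ℕ) * (β + GB) ≤ t := ht.1
    have hmul : ((C u : ℕ) + 1) * (β + GB) ≤ (C v : ℕ) * (β + GB) :=
      Nat.mul_le_mul_right _ hlt
    have : s + GB + 1 ≤ t := by
      have : (C u : ℕ) * (β + GB) + (β + GB) ≤ (C v : ℕ) * (β + GB) := by
        have := hmul; nlinarith
      omega
    have := this
    omega
  have hprop : IsProperAssign G w GB b0 := by
    refine ⟨fun v => Nat.le_add_right 1 _, ?_⟩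
    intro u v huv s hs t ht
    have hne : C u ≠ C v := C.valid huv
    rcases lt_or_gt_of_ne (fun h : (C u : ℕ) = (C v : ℕ) => hne (Fin.ext h)) with h | h
    · have := key u v h s hs t ht
      have habs : (t : ℤ) - (s : ℤ) ≤ |(s : ℤ) - (t : ℤ)| := by
        rw [abs_sub_comm]; exact le_abs_self _
      omega
    · have := key v u h t ht s hs
      have habs : (s : ℤ) - (t : ℤ) ≤ |(s : ℤ) - (t : ℤ)| := le_abs_self _
      omega
  have hMle : MUFI w b0 ≤ k * GB + (k + 1) * β := by
    apply Finset.sup_le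
    intro v _
    have hCv : (C v : ℕ) ≤ k := by have := (C v).isLt; omega
    have : (C v : ℕ) * (β + GB) ≤ k * (β + GB) := Nat.mul_le_mul_right _ hCv
    have hwv := hwβ v
    have hexp : k * (β + GB) + β = k * GB + (k + 1) * β := by ring
    simp only [hb0]
    omega
  have hmem : MUFI w b0 ∈ {m : ℕ | ∃ b : V → ℕ, IsProperAssign G w GB b ∧ MUFI w b = m} :=
    ⟨b0, hprop, rfl⟩
  have hne : {m : ℕ | ∃ b : V → ℕ, IsProperAssign G w GB b ∧ MUFI w b = m}.Nonempty :=
    ⟨_, hmem⟩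
  constructor
  · -- lower bound
    obtain ⟨b, hb, hMU⟩ := Nat.sInf_mem hne
    set m := optMUFI G w GB with hm
    have hsup : ∀ v, b v + w v - 1 ≤ m := by
      intro v
      rw [hm, optMUFI, ← hMU, MUFI]
      exact Finset.le_sup (f := fun v => b v + w v - 1) (Finset.mem_univ v)
    have hαm : α ≤ m := by
      obtain ⟨v0⟩ := ‹Nonempty V›
      have := hsup v0; have := hb.1 v0; have := hwα v0; omega
    -- separation of starting points along edges
    have step : ∀ u v : V, G.Adj u v → b u ≤ b v → b u + α + GB ≤ b v := by
      intro u v huv hle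
      have h2 := hb.2 u v huv
      have hnotin : b u + w u ≤ b v := by
        by_contra hcon
        push_neg at hcon
        have hbv : b v ∈ Finset.Icc (b u) (b u + w u - 1) := by
          simp only [Finset.mem_Icc]; have := hw1 u; omega
        have hbv2 : b v ∈ Finset.Icc (b v) (b v + w v - 1) := by
          simp only [Finset.mem_Icc]; have := hw1 v; omega
        have := h2 (b v) hbv (b v) hbv2
        simp at this
        omega
      have hs : b u + w u - 1 ∈ Finset.Icc (b u) (b u + w u - 1) := by
        simp only [Finset.mem_Icc]; have := hw1 u; omega
      have ht : b v ∈ Finset.Icc (b v) (b v + w v - 1) := by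
        simp only [Finset.mem_Icc]; have := hw1 v; omega
      have h3 := h2 (b u + w u - 1) hs (b v) ht
      rw [abs_sub_comm, abs_of_nonneg (by
        have : ((b u + w u - 1 : ℕ) : ℤ) ≤ (b v : ℤ) := by exact_mod_cast (by omega : b u + w u - 1 ≤ b v)
        omega)] at h3
      have := hwα u
      omega
    set d := α + GB with hd
    have hd0 : 0 < d := by omega
    set K := (m - α) / d with hK
    -- a proper coloring with K+1 colors
    have hcolK : G.Colorable (K + 1) := by
      refine ⟨SimpleGraph.Coloring.mk
        (fun v => ⟨(b v - 1) / d, ?_⟩) ?_⟩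
      · have h1 := hsup v; have h2 := hwα v; have h3 := hb.1 v
        have : b v - 1 ≤ m - α := by omega
        exact Nat.lt_succ_of_le ((Nat.div_le_div_right this).trans_eq rfl)
      · intro u v huv hEq
        simp only [Fin.mk.injEq] at hEq
        rcases le_total (b u) (b v) with h | h
        · have hstep := step u v huv h
          have : (b u - 1) + d ≤ b v - 1 := by have := hb.1 u; omega
          have hdiv : (b u - 1) / d + 1 ≤ (b v - 1) / d := by
            calc (b u - 1) / d + 1 = ((b u - 1) + d) / d := (Nat.add_div_right _ hd0).symm
            _ ≤ (b v - 1) / d := Nat.div_le_div_right this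
          omega
        · have hstep := step v u huv.symm h
          have : (b v - 1) + d ≤ b u - 1 := by have := hb.1 v; omega
          have hdiv : (b v - 1) / d + 1 ≤ (b u - 1) / d := by
            calc (b v - 1) / d + 1 = ((b v - 1) + d) / d := (Nat.add_div_right _ hd0).symm
            _ ≤ (b u - 1) / d := Nat.div_le_div_right this
          omega
    have hχle : k + 1 ≤ K + 1 := by
      have := hcolK.chromaticNumber_le
      rw [hχ] at this
      exact_mod_cast this
    have hkK : k ≤ K := by omega
    have hmul : k * d ≤ m - α := (Nat.le_div_iff_mul_le hd0).mp (by rw [← hK]; exact hkK)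
    have hexp : k * d = k * α + k * GB := by rw [hd]; ring
    have : k * GB + (k + 1) * α = k * GB + k * α + α := by ring
    omega
  · -- upper bound
    calc optMUFI G w GB ≤ MUFI w b0 := Nat.sInf_le hmem
    _ ≤ k * GB + (k + 1) * β := hMle
end

section
/- Let Ĝ be a finite simple graph on nonempty vertex set V̂ with vertex weights w : V̂ → ℕ⁺ and guard-band size GB ∈ ℕ, and let (b_v)_{v∈V̂} be a proper spectrum assignment with end-indices a_v = b_v + w(v) − 1. Let v₁ ∈ V̂ be a vertex whose end-index a_{v₁} is minimal among all vertices. Then the set F₁ = {v ∈ V̂ : b_v ≤ a_{v₁} + GB} is an independent set of Ĝ, i.e., no two vertices of F₁ are adjacent in Ĝ. -/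
lemma key_aux {V : Type*} (G : SimpleGraph V) (w : V → ℕ) (hw : ∀ v, 1 ≤ w v) (GB : ℕ)
    (b : V → ℕ) (hb : IsProperAssign G w GB b)
    (v₁ : V) (hmin : ∀ v : V, b v₁ + w v₁ - 1 ≤ b v + w v - 1)
    (u v : V) (hv : b v ≤ b v₁ + w v₁ - 1 + GB)
    (h : b u + w u - 1 ≤ b v + w v - 1) : ¬ G.Adj u v := by
  intro hadj
  set s := b u + w u - 1 with hs_def
  set t := max (b v) s with ht_def
  have hwu := hw u
  have hwv := hw v
  have hmu := hmin u
  have hs : s ∈ Finset.Icc (b u) (b u + w u - 1) := by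
    rw [Finset.mem_Icc]; omega
  have ht : t ∈ Finset.Icc (b v) (b v + w v - 1) := by
    rw [Finset.mem_Icc]
    exact ⟨le_max_left _ _, max_le (by omega) h⟩
  have spec := hb.2 u v hadj s hs t ht
  have hst : s ≤ t := le_max_right _ _
  have htle : t ≤ s + GB := max_le (by omega) (by omega)
  have hnn : (0 : ℤ) ≤ (t : ℤ) - (s : ℤ) := by
    have : (s : ℤ) ≤ (t : ℤ) := by exact_mod_cast hst
    omega
  rw [abs_sub_comm, abs_of_nonneg hnn] at spec
  have : (t : ℤ) ≤ (s : ℤ) + GB := by exact_mod_cast htle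
  omega

/-- If `v₁` has minimal end-index in a proper spectrum assignment, then
`F₁ = {v | b v ≤ a_{v₁} + GB}` is an independent set of `Ĝ`. -/
theorem indepSet_of_min_end_index {V : Type*} [Fintype V] [Nonempty V]
    (G : SimpleGraph V) (w : V → ℕ) (hw : ∀ v, 1 ≤ w v) (GB : ℕ)
    (b : V → ℕ) (hb : IsProperAssign G w GB b)
    (v₁ : V) (hmin : ∀ v : V, b v₁ + w v₁ - 1 ≤ b v + w v - 1) :
    ∀ u ∈ {v : V | b v ≤ b v₁ + w v₁ - 1 + GB},
      ∀ v ∈ {v : V | b v ≤ b v₁ + w v₁ - 1 + GB},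
        ¬ G.Adj u v := by
  intro u hu v hv
  simp only [Set.mem_setOf_eq] at hu hv
  rcases le_total (b u + w u - 1) (b v + w v - 1) with h | h
  · exact key_aux G w hw GB b hb v₁ hmin u v hv h
  · intro hadj
    exact key_aux G w hw GB b hb v₁ hmin v u hu h hadj.symm
end

section
/- Let Ĝ be a finite simple graph on nonempty vertex set V̂ with vertex weights w : V̂ → ℕ⁺ and guard-band size GB ∈ ℕ, and let a proper spectrum assignment with MUFI M be given. Then there exist an integer k ≥ χ(Ĝ), a partition of V̂ into pairwise disjoint nonempty independent sets F₁, …, F_k of Ĝ, and vertices v_i ∈ F_i for each i, such that (k − 1)·GB + Σ_{i=1}^{k} w(v_i) ≤ M. -/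
lemma no_adj_of_low_start {V : Type*} (G : SimpleGraph V) (w : V → ℕ) (hw : ∀ v, 1 ≤ w v)
    (GB : ℕ) (b : V → ℕ) (hb : IsProperAssign G w GB b) (t : ℕ)
    {u v : V} (hu : t ≤ b u + w u - 1) (hv : t ≤ b v + w v - 1)
    (hbu : b u ≤ t + GB) (hbv : b v ≤ t + GB) : ¬ G.Adj u v := by
  have key : ∀ x y : V, t ≤ b x + w x - 1 → b y ≤ t + GB → b x ≤ b y → ¬ G.Adj x y := by
    intro x y hx hy hxy hadj
    set s : ℕ := min (b x + w x - 1) (b y) with hs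
    have hwx := hw x
    have hwy := hw y
    have hs1 : s ∈ Finset.Icc (b x) (b x + w x - 1) := by
      simp only [Finset.mem_Icc]
      exact ⟨le_min (by omega) hxy, min_le_left _ _⟩
    have ht1 : b y ∈ Finset.Icc (b y) (b y + w y - 1) := by
      simp only [Finset.mem_Icc]; omega
    have H := hb.2 x y hadj s hs1 (b y) ht1
    have hsy : s ≤ b y := min_le_right _ _
    have hgap : b y ≤ s + GB := by
      rcases le_total (b x + w x - 1) (b y) with h' | h'
      · rw [hs, min_eq_left h']; omega
      · rw [hs, min_eq_right h']; omega
    have habs : |(s : ℤ) - (b y : ℤ)| = (b y : ℤ) - s := by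
      rw [abs_sub_comm]
      apply abs_of_nonneg
      omega
    rw [habs] at H
    omega
  intro hadj
  rcases le_total (b u) (b v) with h | h
  · exact key u v hu hbv h hadj
  · exact key v u hv hbu h hadj.symm

lemma aux_partition {V : Type*} [Fintype V] [DecidableEq V]
    (G : SimpleGraph V) (w : V → ℕ) (hw : ∀ v, 1 ≤ w v) (GB : ℕ)
    (b : V → ℕ) (hb : IsProperAssign G w GB b) (M : ℕ)
    (hM : ∀ v : V, b v + w v - 1 ≤ M) :
    ∀ n (S : Finset V), S.card ≤ n → ∀ hS : S.Nonempty,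
    ∃ (k : ℕ) (F : Fin k → Finset V) (vs : Fin k → V),
      1 ≤ k ∧
      (∀ i, (F i).Nonempty) ∧
      (∀ i, F i ⊆ S) ∧
      (∀ i j, i ≠ j → Disjoint (F i) (F j)) ∧
      (∀ v ∈ S, ∃ i, v ∈ F i) ∧
      (∀ i, ∀ u ∈ F i, ∀ v ∈ F i, ¬ G.Adj u v) ∧
      (∀ i, vs i ∈ F i) ∧
      (k - 1) * GB + (∑ i, w (vs i)) + S.inf' hS b ≤ M + 1 := by
  intro n
  induction n with
  | zero =>
    intro S hcard hS
    exact absurd (Finset.card_pos.mpr hS) (by omega)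
  | succ n ih =>
    intro S hcard hS
    set t : ℕ := S.inf' hS (fun v => b v + w v - 1) with ht
    obtain ⟨u, huS, hut⟩ := Finset.exists_mem_eq_inf' hS (fun v => b v + w v - 1)
    have htle : ∀ v ∈ S, t ≤ b v + w v - 1 := fun v hv => Finset.inf'_le _ hv
    set F1 : Finset V := S.filter (fun v => b v ≤ t + GB) with hF1
    set R : Finset V := S.filter (fun v => ¬ b v ≤ t + GB) with hR
    have huF1 : u ∈ F1 := by
      simp only [hF1, Finset.mem_filter]
      refine ⟨huS, ?_⟩
      have := hw u
      omega
    have hF1sub : F1 ⊆ S := Finset.filter_subset _ _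
    have hRsub : R ⊆ S := Finset.filter_subset _ _
    have hF1indep : ∀ x ∈ F1, ∀ y ∈ F1, ¬ G.Adj x y := by
      intro x hx y hy
      simp only [hF1, Finset.mem_filter] at hx hy
      exact no_adj_of_low_start G w hw GB b hb t (htle x hx.1) (htle y hy.1) hx.2 hy.2
    have hdisjF1R : Disjoint F1 R := by
      simp only [hF1, hR]
      exact Finset.disjoint_filter_filter_not S S _
    have hcover : ∀ v ∈ S, v ∈ F1 ∨ v ∈ R := by
      intro v hv
      simp only [hF1, hR, Finset.mem_filter]
      by_cases h : b v ≤ t + GB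
      · exact Or.inl ⟨hv, h⟩
      · exact Or.inr ⟨hv, h⟩
    have hinfS : S.inf' hS b ≤ b u := Finset.inf'_le _ huS
    have htu : t = b u + w u - 1 := ht.trans hut
    have htM : t ≤ M := by have := hM u; omega
    by_cases hRne : R.Nonempty
    · -- recursive case
      have hRcard : R.card ≤ n := by
        have h1 : R.card < S.card := by
          apply Finset.card_lt_card
          constructor
          · exact hRsub
          · intro hSR
            exact (Finset.disjoint_left.mp hdisjF1R huF1) (hSR huS)
        omega
      obtain ⟨k', F', vs', hk', hne', hsub', hdisj', hcov', hindep', hmem', hbound'⟩ :=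
        ih R hRcard hRne
      refine ⟨k' + 1, Fin.cons F1 F', Fin.cons u vs', by omega, ?_, ?_, ?_, ?_, ?_, ?_, ?_⟩
      · intro i
        refine Fin.cases ?_ ?_ i
        · exact ⟨u, huF1⟩
        · exact fun j => by simpa using hne' j
      · intro i
        refine Fin.cases ?_ ?_ i
        · simpa using hF1sub
        · intro j
          simpa using (hsub' j).trans hRsub
      · intro i j hij
        rcases Fin.eq_zero_or_eq_succ i with hi | ⟨i', hi⟩ <;>
          rcases Fin.eq_zero_or_eq_succ j with hj | ⟨j', hj⟩ <;> subst hi <;> subst hj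
        · exact absurd rfl hij
        · simpa using hdisjF1R.mono_right (hsub' j')
        · simpa using (hdisjF1R.mono_right (hsub' i')).symm
        · have hne : i' ≠ j' := fun h => hij (by rw [h])
          simpa using hdisj' i' j' hne
      · intro v hv
        rcases hcover v hv with h | h
        · exact ⟨0, by simpa using h⟩
        · obtain ⟨i, hi⟩ := hcov' v h
          exact ⟨Fin.succ i, by simpa using hi⟩
      · intro i
        refine Fin.cases ?_ ?_ i
        · simpa using hF1indep
        · intro j; simpa using hindep' j
      · intro i
        refine Fin.cases ?_ ?_ i
        · simpa using huF1
        · intro j; simpa using hmem' j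
      · rw [Fin.sum_univ_succ]
        simp only [Fin.cons_zero, Fin.cons_succ]
        have hRinf : t + GB + 1 ≤ R.inf' hRne b := by
          apply Finset.le_inf'
          intro v hv
          simp only [hR, Finset.mem_filter] at hv
          omega
        have hwu := hw u
        have heq : b u + w u - 1 = t := hut.symm
        have hmul : (k' + 1 - 1) * GB = (k' - 1) * GB + GB := by
          have h1 : k' + 1 - 1 = (k' - 1) + 1 := by omega
          rw [h1, add_mul, one_mul]
        omega
    · -- base case : R empty, single class
      refine ⟨1, fun _ => F1, fun _ => u, le_refl 1, fun _ => ⟨u, huF1⟩, fun _ => hF1sub,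
        ?_, ?_, fun _ => hF1indep, fun _ => huF1, ?_⟩
      · intro i j hij
        exact absurd (Subsingleton.elim i j) hij
      · intro v hv
        rcases hcover v hv with h | h
        · exact ⟨0, h⟩
        · exact absurd ⟨v, h⟩ hRne
      · simp only [Finset.univ_unique, Finset.sum_singleton]
        have hwu := hw u
        have : b u + w u - 1 = t := hut.symm
        omega

/-- From any proper spectrum assignment with MUFI `M` one can extract a partition of the
vertex set into `k ≥ χ(Ĝ)` disjoint nonempty independent sets `F₁, …, F_k` together with
representatives `v_i ∈ F_i` such that `(k-1)·GB + Σ w(v_i) ≤ M`. -/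
theorem exists_indep_partition_of_assignment {V : Type*} [Fintype V] [DecidableEq V]
    [Nonempty V] (G : SimpleGraph V) (w : V → ℕ) (hw : ∀ v, 1 ≤ w v) (GB : ℕ)
    (b : V → ℕ) (hb : IsProperAssign G w GB b)
    (χ : ℕ) (hχ : G.chromaticNumber = (χ : ℕ∞)) :
    ∃ (k : ℕ) (F : Fin k → Finset V) (vs : Fin k → V),
      χ ≤ k ∧
      (∀ i, (F i).Nonempty) ∧
      (∀ i j, i ≠ j → Disjoint (F i) (F j)) ∧
      (∀ v : V, ∃ i, v ∈ F i) ∧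
      (∀ i, ∀ u ∈ F i, ∀ v ∈ F i, ¬ G.Adj u v) ∧
      (∀ i, vs i ∈ F i) ∧
      (k - 1) * GB + (∑ i, w (vs i)) ≤ MUFI w b := by
  have hM : ∀ v : V, b v + w v - 1 ≤ MUFI w b := by
    intro v
    simp only [MUFI]
    exact Finset.le_sup (f := fun v => b v + w v - 1) (Finset.mem_univ v)
  have hS : (Finset.univ : Finset V).Nonempty := Finset.univ_nonempty
  obtain ⟨k, F, vs, hk, hne, _, hdisj, hcov, hindep, hmem, hbound⟩ :=
    aux_partition G w hw GB b hb (MUFI w b) hM (Finset.univ.card) Finset.univ le_rfl hS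
  have hcov' : ∀ v : V, ∃ i, v ∈ F i := fun v => hcov v (Finset.mem_univ v)
  -- chromatic number bound
  have hcolor : G.Colorable k := by
    classical
    choose c hc using hcov'
    refine ⟨SimpleGraph.Coloring.mk c ?_⟩
    intro x y hadj heq
    exact hindep (c y) x (heq ▸ hc x) y (hc y) hadj
  have hχk : χ ≤ k := by
    have h1 : G.chromaticNumber ≤ (k : ℕ∞) := hcolor.chromaticNumber_le
    rw [hχ] at h1
    exact_mod_cast h1
  refine ⟨k, F, vs, hχk, hne, hdisj, hcov', hindep, hmem, ?_⟩
  have hinf1 : 1 ≤ (Finset.univ : Finset V).inf' hS b := by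
    apply Finset.le_inf'
    intro v _
    exact hb.1 v
  omega
end

section
/- Let Ĝ be a finite simple graph on nonempty vertex set V̂ with vertex weights w : V̂ → ℕ⁺ and guard-band size GB ∈ ℕ, and let c : V̂ → Fin k be a proper k-coloring of Ĝ (adjacent vertices get different colors). Then there exists a proper spectrum assignment of Ĝ whose MUFI is at most (k − 1)·GB + Σ_{j=1}^{k} m_j, where m_j is the maximum vertex weight over the color class c⁻¹(j) (and m_j = 0 if the class is empty). -/
/-- From a proper `k`-coloring one obtains a proper spectrum assignment whose MUFI
is at most `(k-1)·GB + Σ_j m_j`, where `m_j` is the largest vertex weight in the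
`j`-th color class (`0` if the class is empty). -/
theorem exists_assignment_of_coloring {V : Type*} [Fintype V] [DecidableEq V] [Nonempty V]
    (G : SimpleGraph V) (w : V → ℕ) (hw : ∀ v, 1 ≤ w v) (GB : ℕ)
    (k : ℕ) (c : V → Fin k) (hc : ∀ u v : V, G.Adj u v → c u ≠ c v) :
    ∃ b : V → ℕ, IsProperAssign G w GB b ∧
      MUFI w b ≤ (k - 1) * GB +
        ∑ j : Fin k, (Finset.univ.filter (fun v => c v = j)).sup w := by

  classical
  set m : Fin k → ℕ := fun j => (Finset.univ.filter (fun v => c v = j)).sup w with hm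
  set b : V → ℕ := fun v => 1 + ∑ j ∈ Finset.Iio (c v), (m j + GB) with hb
  have hwm : ∀ v, w v ≤ m (c v) := by
    intro v
    exact Finset.le_sup (by simp)
  have hIic : ∀ j : Fin k, ∑ i ∈ Finset.Iic j, (m i + GB)
      = ∑ i ∈ Finset.Iio j, (m i + GB) + (m j + GB) := by
    intro j
    rw [← Finset.Iio_insert, Finset.sum_insert (by simp)]
    ring
  -- key separation lemma
  have key : ∀ u v : V, c u < c v → ∀ s t : ℕ,
      s ≤ b u + w u - 1 → b v ≤ t → s + GB + 1 ≤ t := by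
    intro u v hlt s t hs ht
    have h1 : s ≤ ∑ j ∈ Finset.Iio (c u), (m j + GB) + w u := by
      have : b u = 1 + ∑ j ∈ Finset.Iio (c u), (m j + GB) := rfl
      omega
    have h2 : ∑ i ∈ Finset.Iic (c u), (m i + GB) ≤ ∑ i ∈ Finset.Iio (c v), (m i + GB) := by
      apply Finset.sum_le_sum_of_subset
      intro j hj
      exact Finset.mem_Iio.mpr ((Finset.mem_Iic.mp hj).trans_lt hlt)
    have h3 : b v = 1 + ∑ j ∈ Finset.Iio (c v), (m j + GB) := rfl
    have h4 := hIic (c u)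
    have h5 := hwm u
    omega
  refine ⟨b, ⟨fun v => Nat.le_add_right 1 _, ?_⟩, ?_⟩
  · intro u v huv s hs t ht
    simp only [Finset.mem_Icc] at hs ht
    rcases (hc u v huv).lt_or_gt with h | h
    · have h1 := key u v h s t hs.2 ht.1
      have habs : |(s : ℤ) - t| = (t : ℤ) - s := by
        rw [abs_sub_comm]
        exact abs_of_nonneg (by push_cast; omega)
      rw [habs]; push_cast; omega
    · have h1 := key v u h t s ht.2 hs.1
      have habs : |(s : ℤ) - t| = (s : ℤ) - t := by
        exact abs_of_nonneg (by push_cast; omega)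
      rw [habs]; push_cast; omega
  · apply Finset.sup_le
    intro v _
    have h1 : b v + w v - 1 = ∑ j ∈ Finset.Iio (c v), (m j + GB) + w v := by
      have : b v = 1 + ∑ j ∈ Finset.Iio (c v), (m j + GB) := rfl
      have := hw v
      omega
    have h2 : ∑ j ∈ Finset.Iio (c v), (m j + GB)
        = ∑ j ∈ Finset.Iio (c v), m j + (Finset.Iio (c v)).card * GB := by
      rw [Finset.sum_add_distrib, Finset.sum_const, smul_eq_mul]
    have h3 : (Finset.Iio (c v)).card ≤ k - 1 := by
      have hsub : Finset.Iio (c v) ⊆ Finset.univ.erase (c v) := by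
        intro j hj
        simp only [Finset.mem_Iio] at hj
        exact Finset.mem_erase.mpr ⟨hj.ne, Finset.mem_univ _⟩
      calc (Finset.Iio (c v)).card ≤ (Finset.univ.erase (c v)).card :=
            Finset.card_le_card hsub
        _ = k - 1 := by rw [Finset.card_erase_of_mem (Finset.mem_univ _)]; simp
    have h4 : ∑ j ∈ Finset.Iio (c v), m j + m (c v) ≤ ∑ j : Fin k, m j := by
      have : ∑ j ∈ Finset.Iic (c v), m j = ∑ j ∈ Finset.Iio (c v), m j + m (c v) := by
        rw [← Finset.Iio_insert, Finset.sum_insert (by simp)]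
        ring
      rw [← this]
      exact Finset.sum_le_sum_of_subset (Finset.subset_univ _)
    have h5 := hwm v
    have h7 : (∑ j : Fin k, m j) = Finset.univ.sum m := rfl
    have h6 : (Finset.Iio (c v)).card * GB ≤ (k - 1) * GB :=
      Nat.mul_le_mul_right _ h3
    omega
end

section
/- Let Ĝ be a finite simple graph on nonempty vertex set V̂ with vertex weights w : V̂ → ℕ⁺ satisfying α ≤ w(v) ≤ β for all v (α, β ∈ ℕ⁺), and guard-band size GB ∈ ℕ. Let ρ ≥ 1 be a real number and suppose Ĝ admits a proper k-coloring with k ≤ ρ·χ(Ĝ). Then there exists a proper spectrum assignment of Ĝ whose MUFI is at most ρ·max(β/α, 2)·|opt(Ĝ)|. -/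
/-- Adjacent vertices have well-separated starting points. -/
theorem gap_lemma {V : Type*} {G : SimpleGraph V} {w : V → ℕ} {GB : ℕ} {b : V → ℕ}
    (hb : IsProperAssign G w GB b) {u v : V} (h : G.Adj u v)
    (hu : 1 ≤ w u) (hv : 1 ≤ w v) :
    b u + w u + GB ≤ b v ∨ b v + w v + GB ≤ b u := by
  have key : ∀ x y : V, G.Adj x y → 1 ≤ w x → 1 ≤ w y → b x ≤ b y →
      b x + w x + GB ≤ b y := by
    intro x y hxy hwx hwy hle
    by_cases hcase : b y ≤ b x + w x - 1
    · exfalso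
      have := hb.2 x y hxy (b y) (Finset.mem_Icc.mpr ⟨hle, hcase⟩) (b y)
        (Finset.mem_Icc.mpr ⟨le_refl _, by omega⟩)
      simp at this
      omega
    · have hby : b x + w x ≤ b y := by omega
      have := hb.2 x y hxy (b x + w x - 1)
        (Finset.mem_Icc.mpr ⟨by omega, le_refl _⟩) (b y)
        (Finset.mem_Icc.mpr ⟨le_refl _, by omega⟩)
      have habs : |((b x + w x - 1 : ℕ) : ℤ) - (b y : ℤ)| = (b y : ℤ) - ((b x + w x - 1 : ℕ) : ℤ) := by
        rw [abs_sub_comm]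
        apply abs_of_nonneg
        have : ((b x + w x - 1 : ℕ) : ℤ) ≤ (b y : ℤ) := by exact_mod_cast by omega
        linarith
      rw [habs] at this
      have hc : ((b x + w x - 1 : ℕ) : ℤ) = (b x : ℤ) + (w x : ℤ) - 1 := by
        push_cast [Nat.cast_sub (by omega : 1 ≤ b x + w x)]; ring
      rw [hc] at this
      have : (b x : ℤ) + w x + GB ≤ (b y : ℤ) := by linarith
      exact_mod_cast this
  rcases le_total (b u) (b v) with hle | hle
  · exact Or.inl (key u v h hu hv hle)
  · exact Or.inr (key v u h.symm hv hu hle)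

/-- The coloring-spread assignment is proper. -/
theorem spread_proper {V : Type*} (G : SimpleGraph V) (w : V → ℕ) (GB β : ℕ)
    (hwβ : ∀ v, w v ≤ β) (k : ℕ) (c : V → Fin k)
    (hc : ∀ u v : V, G.Adj u v → c u ≠ c v) :
    IsProperAssign G w GB (fun v => 1 + (c v : ℕ) * (β + GB)) := by
  constructor
  · intro v; exact Nat.le_add_right 1 _
  · intro u v huv s hs t ht
    simp only [Finset.mem_Icc] at hs ht
    have hne : (c u : ℕ) ≠ (c v : ℕ) := fun he => hc u v huv (Fin.ext he)
    have key : ∀ x y : V, (c x : ℕ) < (c y : ℕ) →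
        ∀ p q : ℕ, p ≤ 1 + (c x : ℕ) * (β + GB) + w x - 1 →
          1 + (c y : ℕ) * (β + GB) ≤ q → (GB : ℤ) ≤ |(p : ℤ) - (q : ℤ)| - 1 := by
      intro x y hxy p q hp hq
      have hmul : ((c x : ℕ) + 1) * (β + GB) ≤ (c y : ℕ) * (β + GB) :=
        Nat.mul_le_mul_right _ (by omega)
      have hmul' : (c x : ℕ) * (β + GB) + (β + GB) ≤ (c y : ℕ) * (β + GB) := by
        rw [add_mul, one_mul] at hmul; exact hmul
      have hpq : p + GB + 1 ≤ q := by
        have hwx := hwβ x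
        omega
      have h1 : (p : ℤ) + GB + 1 ≤ (q : ℤ) := by exact_mod_cast hpq
      have h2 : (GB : ℤ) + 1 ≤ (q : ℤ) - (p : ℤ) := by linarith
      calc (GB : ℤ) ≤ ((q : ℤ) - p) - 1 := by linarith
        _ ≤ |(q : ℤ) - p| - 1 := by linarith [le_abs_self ((q : ℤ) - p)]
        _ = |(p : ℤ) - q| - 1 := by rw [abs_sub_comm]
    rcases Nat.lt_or_ge (c u : ℕ) (c v : ℕ) with hlt | hge
    · exact key u v hlt s t hs.2 ht.1
    · have hlt : (c v : ℕ) < (c u : ℕ) := by omega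
      rw [abs_sub_comm]
      exact key v u hlt t s ht.2 hs.1

/-- If `Ĝ` admits a proper `k`-coloring with `k ≤ ρ·χ(Ĝ)` and all weights lie in
`[α, β]`, then there is a proper spectrum assignment whose MUFI is at most
`ρ · max(β/α, 2) · |opt(Ĝ)|`. -/
theorem exists_assignment_approx {V : Type*} [Fintype V] [Nonempty V]
    (G : SimpleGraph V) (w : V → ℕ) (GB : ℕ) (α β : ℕ)
    (hα : 1 ≤ α) (hβ : 1 ≤ β) (hwα : ∀ v, α ≤ w v) (hwβ : ∀ v, w v ≤ β)
    (χ : ℕ) (hχ : G.chromaticNumber = (χ : ℕ∞))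
    (ρ : ℝ) (hρ : 1 ≤ ρ)
    (k : ℕ) (c : V → Fin k) (hc : ∀ u v : V, G.Adj u v → c u ≠ c v)
    (hk : (k : ℝ) ≤ ρ * (χ : ℝ)) :
    ∃ b : V → ℕ, IsProperAssign G w GB b ∧
      (MUFI w b : ℝ) ≤ ρ * max ((β : ℝ) / (α : ℝ)) 2 * (optMUFI G w GB : ℝ) := by
  set M : ℝ := max ((β : ℝ) / (α : ℝ)) 2 with hMdef
  have hαpos : (0 : ℝ) < (α : ℝ) := by exact_mod_cast hα
  have hM1 : (β : ℝ) ≤ M * (α : ℝ) := by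
    have : (β : ℝ) / (α : ℝ) ≤ M := le_max_left _ _
    calc (β : ℝ) = (β : ℝ) / α * α := by field_simp
      _ ≤ M * α := by apply mul_le_mul_of_nonneg_right this hαpos.le
  have hM2 : (2 : ℝ) ≤ M := le_max_right _ _
  -- the spread assignment
  set b1 : V → ℕ := fun v => 1 + (c v : ℕ) * (β + GB) with hb1def
  have hb1 : IsProperAssign G w GB b1 := spread_proper G w GB β hwβ k c hc
  -- optimum is attained
  have hSne : {m : ℕ | ∃ b : V → ℕ, IsProperAssign G w GB b ∧ MUFI w b = m}.Nonempty :=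
    ⟨MUFI w b1, b1, hb1, rfl⟩
  obtain ⟨b₀, hb₀, hb₀opt⟩ := Nat.sInf_mem hSne
  have hb₀opt' : MUFI w b₀ = optMUFI G w GB := hb₀opt
  have hBv : ∀ v, b₀ v + w v - 1 ≤ optMUFI G w GB := by
    intro v
    calc b₀ v + w v - 1 ≤ MUFI w b₀ :=
          Finset.le_sup (f := fun v => b₀ v + w v - 1) (Finset.mem_univ v)
      _ = optMUFI G w GB := hb₀opt'
  have hoptα : α ≤ optMUFI G w GB := by
    obtain ⟨v⟩ := ‹Nonempty V›
    have := hBv v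
    have := hb₀.1 v
    have := hwα v
    omega
  by_cases hχ2 : 2 ≤ χ
  · -- main case
    set d : ℕ := α + GB with hddef
    have hd : 0 < d := by omega
    set B : ℕ := Finset.univ.sup b₀ with hBdef
    obtain ⟨v₀, _, hv₀⟩ := Finset.exists_mem_eq_sup Finset.univ Finset.univ_nonempty b₀
    -- coloring from b₀
    have hcol : G.Colorable ((B - 1) / d + 1) := by
      refine ⟨SimpleGraph.Coloring.mk
        (fun v => ⟨(b₀ v - 1) / d, ?_⟩) ?_⟩
      · have h1 : b₀ v ≤ B := Finset.le_sup (Finset.mem_univ v)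
        have := Nat.div_le_div_right (c := d) (by omega : b₀ v - 1 ≤ B - 1)
        omega
      · intro u v huv hne
        have hgap := gap_lemma hb₀ huv (by have := hwα u; omega) (by have := hwα v; omega)
        have hne' : (b₀ u - 1) / d = (b₀ v - 1) / d := by
          simpa using congrArg Fin.val hne
        have key : ∀ x y : V, b₀ x + w x + GB ≤ b₀ y →
            (b₀ x - 1) / d + 1 ≤ (b₀ y - 1) / d := by
          intro x y hxy
          have hwx := hwα x
          have hx1 := hb₀.1 x
          have h1 : b₀ x - 1 + d ≤ b₀ y - 1 := by omega
          calc (b₀ x - 1) / d + 1 = (b₀ x - 1 + d) / d := by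
                rw [Nat.add_div_right _ hd]
            _ ≤ (b₀ y - 1) / d := Nat.div_le_div_right h1
        rcases hgap with h | h
        · have := key u v h; omega
        · have := key v u h; omega

    have hχle : χ ≤ (B - 1) / d + 1 := by
      have := hcol.chromaticNumber_le
      rw [hχ] at this
      exact_mod_cast this
    have hlow : (χ - 1) * d + α ≤ optMUFI G w GB := by
      have h1 : χ - 1 ≤ (B - 1) / d := by omega
      have h2 : (χ - 1) * d ≤ B - 1 := (Nat.le_div_iff_mul_le hd).mp h1
      have h3 := hBv v₀
      have h4 := hwα v₀
      have h5 := hb₀.1 v₀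
      rw [hBdef, hv₀] at h2
      omega
    -- use b1
    refine ⟨b1, hb1, ?_⟩
    have hk1 : 1 ≤ k := Fin.pos (c (Classical.arbitrary V))
    have hmu : MUFI w b1 ≤ (k - 1) * (β + GB) + β := by
      apply Finset.sup_le
      intro v _
      have hcv : (c v : ℕ) ≤ k - 1 := by have := (c v).isLt; omega
      have := Nat.mul_le_mul_right (β + GB) hcv
      have := hwβ v
      simp only [hb1def]
      omega
    -- real arithmetic
    have hcast : ((MUFI w b1 : ℝ)) ≤ ((k : ℝ) - 1) * ((β : ℝ) + GB) + β := by
      have : ((MUFI w b1 : ℕ) : ℝ) ≤ (((k - 1) * (β + GB) + β : ℕ) : ℝ) := by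
        exact_mod_cast hmu
      calc (MUFI w b1 : ℝ) ≤ (((k - 1) * (β + GB) + β : ℕ) : ℝ) := this
        _ = ((k : ℝ) - 1) * ((β : ℝ) + GB) + β := by
            push_cast [Nat.cast_sub hk1]; ring
    have hlowR : ((χ : ℝ) - 1) * ((α : ℝ) + GB) + α ≤ (optMUFI G w GB : ℝ) := by
      have : (((χ - 1) * d + α : ℕ) : ℝ) ≤ ((optMUFI G w GB : ℕ) : ℝ) := by
        exact_mod_cast hlow
      calc ((χ : ℝ) - 1) * ((α : ℝ) + GB) + α
          = (((χ - 1) * d + α : ℕ) : ℝ) := by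
            simp only [hddef]
            push_cast [Nat.cast_sub (by omega : 1 ≤ χ)]; ring
        _ ≤ _ := this
    have hχR : (2 : ℝ) ≤ (χ : ℝ) := by exact_mod_cast hχ2
    have hGB : (0 : ℝ) ≤ (GB : ℝ) := Nat.cast_nonneg _
    have hβR : (0 : ℝ) ≤ (β : ℝ) := Nat.cast_nonneg _
    have hkey : (χ : ℝ) * ((β : ℝ) + GB) ≤ M * (((χ : ℝ) - 1) * ((α : ℝ) + GB) + α) := by
      nlinarith [mul_le_mul_of_nonneg_left hM1 (by linarith : (0:ℝ) ≤ (χ:ℝ) - 1),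
        mul_le_mul_of_nonneg_right hM2 (mul_nonneg (by linarith : (0:ℝ) ≤ (χ:ℝ) - 1) hGB)]
    calc (MUFI w b1 : ℝ) ≤ ((k : ℝ) - 1) * ((β : ℝ) + GB) + β := hcast
      _ ≤ (k : ℝ) * ((β : ℝ) + GB) := by nlinarith
      _ ≤ ρ * (χ : ℝ) * ((β : ℝ) + GB) := by nlinarith
      _ = ρ * ((χ : ℝ) * ((β : ℝ) + GB)) := by ring
      _ ≤ ρ * (M * (((χ : ℝ) - 1) * ((α : ℝ) + GB) + α)) := by
          apply mul_le_mul_of_nonneg_left hkey (by linarith)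
      _ ≤ ρ * (M * (optMUFI G w GB : ℝ)) := by
          apply mul_le_mul_of_nonneg_left _ (by linarith)
          apply mul_le_mul_of_nonneg_left hlowR (by linarith)
      _ = ρ * M * (optMUFI G w GB : ℝ) := by ring
  · -- χ ≤ 1 : G is edgeless
    have hedge : ∀ u v : V, ¬ G.Adj u v := by
      have hcol1 : G.Colorable 1 := by
        rw [← SimpleGraph.chromaticNumber_le_iff_colorable, hχ]
        exact_mod_cast (by omega : χ ≤ 1)
      obtain ⟨C⟩ := hcol1
      intro u v huv
      exact C.valid huv (Subsingleton.elim _ _)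
    refine ⟨fun _ => 1, ⟨fun v => le_refl 1, fun u v huv => absurd huv (hedge u v)⟩, ?_⟩
    have hmu : MUFI w (fun _ => 1) ≤ β := by
      apply Finset.sup_le
      intro v _
      have := hwβ v
      show 1 + w v - 1 ≤ β
      omega
    have hmuR : (MUFI w (fun _ => 1) : ℝ) ≤ (β : ℝ) := by exact_mod_cast hmu
    have hoptR : (α : ℝ) ≤ (optMUFI G w GB : ℝ) := by exact_mod_cast hoptα
    have hMpos : (0 : ℝ) < M := by linarith
    calc (MUFI w (fun _ => 1) : ℝ) ≤ (β : ℝ) := hmuR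
      _ ≤ M * α := hM1
      _ ≤ M * (optMUFI G w GB : ℝ) := mul_le_mul_of_nonneg_left hoptR hMpos.le
      _ ≤ ρ * (M * (optMUFI G w GB : ℝ)) := le_mul_of_one_le_left
          (mul_nonneg hMpos.le (Nat.cast_nonneg _)) hρ
      _ = ρ * M * (optMUFI G w GB : ℝ) := by ring
end

section
/- Let Ĝ be a finite simple graph on nonempty vertex set V̂ with vertex weights w : V̂ → ℕ⁺ satisfying α ≤ w(v) ≤ β for all v (α, β ∈ ℕ⁺), and guard-band size GB ∈ ℕ. Then there exists a proper spectrum assignment of Ĝ whose MUFI is at most (β/α)·|opt(Ĝ)|; in particular, such an assignment can be obtained from any optimal proper coloring of Ĝ with exactly χ(Ĝ) colors. -/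
lemma sep_lemma {V : Type*} {G : SimpleGraph V} {w : V → ℕ} {GB : ℕ} {b : V → ℕ}
    (hw : ∀ v, 1 ≤ w v) (hb : IsProperAssign G w GB b) {u v : V} (h : G.Adj u v)
    (hle : b u ≤ b v) : b u + w u + GB ≤ b v := by
  have hwu := hw u
  have hwv := hw v
  by_cases hov : b v ≤ b u + w u - 1
  · have h1 := hb.2 u v h (b v) (Finset.mem_Icc.mpr ⟨hle, hov⟩)
      (b v) (Finset.mem_Icc.mpr ⟨le_refl _, by omega⟩)
    simp at h1
    omega
  · push_neg at hov
    have h1 := hb.2 u v h (b u + w u - 1) (Finset.mem_Icc.mpr ⟨by omega, le_refl _⟩)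
      (b v) (Finset.mem_Icc.mpr ⟨le_refl _, by omega⟩)
    rcases abs_cases ((↑(b u + w u - 1) : ℤ) - (b v : ℤ)) with ⟨he, _⟩ | ⟨he, _⟩ <;>
      rw [he] at h1 <;> omega

lemma lower_bound {V : Type*} [Fintype V] [Nonempty V] {G : SimpleGraph V} {w : V → ℕ}
    {GB : ℕ} {α : ℕ} (hα : 1 ≤ α) (hwα : ∀ v, α ≤ w v)
    {χ : ℕ} (hχ : G.chromaticNumber = (χ : ℕ∞)) {b : V → ℕ}
    (hb : IsProperAssign G w GB b) : α + (χ - 1) * (α + GB) ≤ MUFI w b := by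
  have hw1 : ∀ v, 1 ≤ w v := fun v => le_trans hα (hwα v)
  set M := MUFI w b with hM
  have hMv : ∀ v, b v + w v - 1 ≤ M := fun v =>
    Finset.le_sup (f := fun v => b v + w v - 1) (Finset.mem_univ v)
  have hbM : ∀ v, b v - 1 ≤ M - α := by
    intro v
    have := hMv v
    have := hwα v
    have := hb.1 v
    omega
  -- coloring
  set K := (M - α) / (α + GB) with hK
  have hcol : G.Colorable (K + 1) := by
    refine ⟨SimpleGraph.Coloring.mk
      (fun v => ⟨(b v - 1) / (α + GB), Nat.lt_succ_of_le (Nat.div_le_div_right (hbM v))⟩) ?_⟩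
    intro u v hadj
    simp only [Ne, Fin.mk.injEq]
    rcases le_total (b u) (b v) with hle | hle
    · have hs := sep_lemma hw1 hb hadj hle
      have : (b u - 1) + (α + GB) ≤ b v - 1 := by
        have := hwα u; have := hb.1 u; omega
      have h2 : (b u - 1) / (α + GB) + 1 ≤ (b v - 1) / (α + GB) := by
        calc (b u - 1) / (α + GB) + 1 = ((b u - 1) + (α + GB)) / (α + GB) := by
              rw [Nat.add_div_right _ (by omega)]
          _ ≤ (b v - 1) / (α + GB) := Nat.div_le_div_right this
      omega
    · have hs := sep_lemma hw1 hb hadj.symm hle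
      have : (b v - 1) + (α + GB) ≤ b u - 1 := by
        have := hwα v; have := hb.1 v; omega
      have h2 : (b v - 1) / (α + GB) + 1 ≤ (b u - 1) / (α + GB) := by
        calc (b v - 1) / (α + GB) + 1 = ((b v - 1) + (α + GB)) / (α + GB) := by
              rw [Nat.add_div_right _ (by omega)]
          _ ≤ (b u - 1) / (α + GB) := Nat.div_le_div_right this
      omega
  have hχle : χ ≤ K + 1 := by
    have := hcol.chromaticNumber_le
    rw [hχ] at this
    exact_mod_cast this
  have hαM : α ≤ M := by
    obtain ⟨v⟩ := (inferInstance : Nonempty V)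
    have := hMv v; have := hwα v; have := hb.1 v; omega
  have : (χ - 1) * (α + GB) ≤ M - α := by
    calc (χ - 1) * (α + GB) ≤ K * (α + GB) := Nat.mul_le_mul_right _ (Nat.sub_le_of_le_add hχle)
      _ ≤ M - α := Nat.div_mul_le_self _ _
  omega

lemma upper_construct {V : Type*} [Fintype V] {G : SimpleGraph V} {w : V → ℕ}
    {GB : ℕ} {β : ℕ} (hwβ : ∀ v, w v ≤ β) (hw1 : ∀ v, 1 ≤ w v)
    {χ : ℕ} (c : V → Fin χ) (hc : ∀ u v : V, G.Adj u v → c u ≠ c v) :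
    IsProperAssign G w GB (fun v => 1 + (c v : ℕ) * (β + GB)) ∧
      MUFI w (fun v => 1 + (c v : ℕ) * (β + GB)) ≤ β + (χ - 1) * (β + GB) := by
  constructor
  · refine ⟨fun v => Nat.le_add_right 1 _, ?_⟩
    intro u v hadj s hs t ht
    rw [Finset.mem_Icc] at hs ht
    have hne : (c u : ℕ) ≠ (c v : ℕ) := fun h => hc u v hadj (Fin.ext h)
    have hwu := hwβ u; have hwv := hwβ v
    have h1u := hw1 u; have h1v := hw1 v
    simp only at hs ht
    have hd : (c u : ℕ) + 1 ≤ (c v : ℕ) ∨ (c v : ℕ) + 1 ≤ (c u : ℕ) := by omega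
    rcases abs_cases ((s : ℤ) - (t : ℤ)) with ⟨he, _⟩ | ⟨he, _⟩ <;> rw [he] <;>
      rcases hd with h | h <;>
      · have hm := Nat.mul_le_mul_right (β + GB) h
        rw [add_mul, one_mul] at hm
        omega
  · apply Finset.sup_le
    intro v _
    show 1 + (c v : ℕ) * (β + GB) + w v - 1 ≤ β + (χ - 1) * (β + GB)
    have hv : (c v : ℕ) ≤ χ - 1 := by have := (c v).isLt; omega
    have := Nat.mul_le_mul_right (β + GB) hv
    have := hwβ v
    omega

/-- If all vertex weights lie in `[α, β]`, then there is a proper spectrum assignment whose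
MUFI is at most `(β/α)·|opt(Ĝ)|`; in particular such an assignment can be obtained from any
optimal proper coloring with exactly `χ(Ĝ)` colors (all vertices of one color class start
at the same slot). -/
theorem exists_assignment_ratio_of_optimal_coloring {V : Type*} [Fintype V] [Nonempty V]
    (G : SimpleGraph V) (w : V → ℕ) (GB : ℕ) (α β : ℕ)
    (hα : 1 ≤ α) (hβ : 1 ≤ β) (hwα : ∀ v, α ≤ w v) (hwβ : ∀ v, w v ≤ β)
    (χ : ℕ) (hχ : G.chromaticNumber = (χ : ℕ∞)) :
    (∃ b : V → ℕ, IsProperAssign G w GB b ∧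
        (MUFI w b : ℝ) ≤ ((β : ℝ) / (α : ℝ)) * (optMUFI G w GB : ℝ)) ∧
      ∀ c : V → Fin χ, (∀ u v : V, G.Adj u v → c u ≠ c v) →
        ∃ b : V → ℕ, IsProperAssign G w GB b ∧
          (∀ u v : V, c u = c v → b u = b v) ∧
          (MUFI w b : ℝ) ≤ ((β : ℝ) / (α : ℝ)) * (optMUFI G w GB : ℝ) := by
  have hw1 : ∀ v, 1 ≤ w v := fun v => le_trans hα (hwα v)
  have hαβ : α ≤ β := by obtain ⟨v⟩ := (inferInstance : Nonempty V);
                         exact le_trans (hwα v) (hwβ v)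
  -- main claim: any coloring gives a good assignment
  have main : ∀ c : V → Fin χ, (∀ u v : V, G.Adj u v → c u ≠ c v) →
      ∃ b : V → ℕ, IsProperAssign G w GB b ∧
        (∀ u v : V, c u = c v → b u = b v) ∧
        (MUFI w b : ℝ) ≤ ((β : ℝ) / (α : ℝ)) * (optMUFI G w GB : ℝ) := by
    intro c hc
    obtain ⟨hprop, hmufi⟩ := upper_construct hwβ hw1 c hc
    set b : V → ℕ := fun v => 1 + (c v : ℕ) * (β + GB) with hbdef
    refine ⟨b, hprop, fun u v h => by simp [hbdef, h], ?_⟩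
    -- opt lower bound
    have hopt : α + (χ - 1) * (α + GB) ≤ optMUFI G w GB := by
      refine le_csInf ⟨MUFI w b, b, hprop, rfl⟩ ?_
      rintro m ⟨b', hb', rfl⟩
      exact lower_bound hα hwα hχ hb'
    -- nat inequality M * α ≤ β * opt
    have hnat : MUFI w b * α ≤ β * optMUFI G w GB := by
      calc MUFI w b * α ≤ (β + (χ - 1) * (β + GB)) * α := Nat.mul_le_mul_right _ hmufi
        _ ≤ β * (α + (χ - 1) * (α + GB)) := by
            have : (χ - 1) * (β + GB) * α ≤ β * ((χ - 1) * (α + GB)) := by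
              have h1 : (β + GB) * α ≤ β * (α + GB) := by nlinarith
              calc (χ - 1) * (β + GB) * α = (χ - 1) * ((β + GB) * α) := by ring
                _ ≤ (χ - 1) * (β * (α + GB)) := Nat.mul_le_mul_left _ h1
                _ = β * ((χ - 1) * (α + GB)) := by ring
            nlinarith
        _ ≤ β * optMUFI G w GB := Nat.mul_le_mul_left _ hopt
    have hfinal : (MUFI w b : ℝ) ≤ ((β : ℝ) / (α : ℝ)) * (optMUFI G w GB : ℝ) := by
      rw [div_mul_eq_mul_div, le_div_iff₀ (by positivity)]
      calc (MUFI w b : ℝ) * α = ((MUFI w b * α : ℕ) : ℝ) := by push_cast; ring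
        _ ≤ ((β * optMUFI G w GB : ℕ) : ℝ) := by exact_mod_cast hnat
        _ = (β : ℝ) * optMUFI G w GB := by push_cast; ring
    exact hfinal
  refine ⟨?_, main⟩
  have hcol : G.Colorable χ := by
    rw [← SimpleGraph.chromaticNumber_le_iff_colorable, hχ]
  obtain ⟨C⟩ := hcol
  obtain ⟨b, h1, _, h3⟩ := main C (fun u v h => C.valid h)
  exact ⟨b, h1, h3⟩
end
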